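/- arXiv:2512.07506 — 3 statements merged into one kernel-verified Lean document; each statement's English description precedes it below -/
import Mathlib

section
/- Let φ ∈ ℂ^n be a left eigenvector of A with eigenvalue λ, S = [A^{h-1}B, …, B], and let Q ∈ ℝ^{mh×m(h-1)} have columns forming a basis of ker(R) with R = 1_h^⊤ ⊗ I_m. Then φ^⊤ S Q = 0 if and only if φ^⊤ B = 0 or λ = 1. -/
/-- Let `φᵀ A = λ φᵀ` (left eigenvector over ℂ of real `A`),
`S = [A^{h-1}B, …, B]`, and let the columns of `Q` form a basis of
`ker R` with `R = 1ₕᵀ ⊗ Iₘ`. Then `φᵀ S Q = 0` iff `φᵀ B = 0` or `λ = 1`. -/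
theorem stmt_3 (n m h : ℕ) (hh : 2 ≤ h)
    (A : Matrix (Fin n) (Fin n) ℝ) (B : Matrix (Fin n) (Fin m) ℝ)
    (S : Matrix (Fin n) (Fin h × Fin m) ℝ)
    (hS : S = Matrix.of fun x p => ((A ^ (h - 1 - (p.1 : ℕ))) * B) x p.2)
    (R : Matrix (Fin m) (Fin h × Fin m) ℝ)
    (hR : R = Matrix.of fun j p => if p.2 = j then 1 else 0)
    (Q : Matrix (Fin h × Fin m) (Fin (m * (h - 1))) ℝ)
    (hQind : LinearIndependent ℝ (fun c : Fin (m * (h - 1)) => fun p => Q p c))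
    (hQspan : Submodule.span ℝ (Set.range (fun c : Fin (m * (h - 1)) => fun p => Q p c))
        = LinearMap.ker R.mulVecLin)
    (φ : Fin n → ℂ) (lam : ℂ) (hφ : φ ≠ 0)
    (heig : Matrix.vecMul φ (A.map (Complex.ofReal)) = lam • φ) :
    Matrix.vecMul φ ((S * Q).map (Complex.ofReal)) = 0 ↔
      (Matrix.vecMul φ (B.map (Complex.ofReal)) = 0 ∨ lam = 1) := by
  have h1 : 0 < h := by omega
  set ψ : Fin m → ℂ := Matrix.vecMul φ (B.map Complex.ofReal) with hψ
  set w : Fin h × Fin m → ℂ := Matrix.vecMul φ (S.map Complex.ofReal) with hw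
  -- powers
  have hpow : ∀ k : ℕ, Matrix.vecMul φ ((A ^ k).map Complex.ofReal) = lam ^ k • φ := by
    intro k
    induction k with
    | zero => simp
    | succ k ih =>
      have hm : ((A ^ (k+1)).map Complex.ofReal)
          = ((A ^ k).map Complex.ofReal) * (A.map Complex.ofReal) := by
        ext i j
        simp [Matrix.mul_apply, pow_succ]
      rw [hm, ← Matrix.vecMul_vecMul, ih, Matrix.smul_vecMul, heig, smul_smul, ← pow_succ]
  -- value of w
  have hwval : ∀ p : Fin h × Fin m, w p = lam ^ (h - 1 - (p.1 : ℕ)) * ψ p.2 := by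
    intro p
    have hSm : (S.map Complex.ofReal) = Matrix.of fun x p =>
        (((A ^ (h - 1 - (p.1 : ℕ))).map Complex.ofReal) * (B.map Complex.ofReal)) x p.2 := by
      ext x q
      simp [hS, Matrix.mul_apply]
    have : w p = (Matrix.vecMul φ (((A ^ (h - 1 - (p.1 : ℕ))).map Complex.ofReal)
        * (B.map Complex.ofReal))) p.2 := by
      simp only [hw, hSm, Matrix.vecMul, dotProduct, Matrix.of_apply]
    rw [this, ← Matrix.vecMul_vecMul, hpow, Matrix.smul_vecMul]
    simp [hψ]
  -- reduce LHS
  have hLHS : Matrix.vecMul φ ((S * Q).map Complex.ofReal)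
      = Matrix.vecMul w (Q.map Complex.ofReal) := by
    have : (S * Q).map Complex.ofReal = (S.map Complex.ofReal) * (Q.map Complex.ofReal) := by
      ext i j; simp [Matrix.mul_apply]
    rw [this, ← Matrix.vecMul_vecMul]
  -- the linear functional
  let F : ((Fin h × Fin m) → ℝ) →ₗ[ℝ] ℂ :=
    { toFun := fun v => ∑ p, v p • w p
      map_add' := by intro v u; simp [add_smul, Finset.sum_add_distrib]
      map_smul' := by intro a v; simp [mul_smul, Finset.smul_sum] }
  have hFcol : ∀ c, Matrix.vecMul w (Q.map Complex.ofReal) c = F (fun p => Q p c) := by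
    intro c
    simp only [Matrix.vecMul, dotProduct, Matrix.map_apply, F, LinearMap.coe_mk,
      AddHom.coe_mk]
    refine Finset.sum_congr rfl fun p _ => ?_
    rw [Complex.real_smul, mul_comm]
  have step1 : Matrix.vecMul φ ((S * Q).map Complex.ofReal) = 0
      ↔ ∀ v ∈ LinearMap.ker R.mulVecLin, F v = 0 := by
    rw [hLHS]
    constructor
    · intro h0 v hv
      rw [← hQspan] at hv
      have hrange : Set.range (fun c : Fin (m * (h - 1)) => fun p => Q p c)
          ⊆ (LinearMap.ker F : Set _) := by
        rintro _ ⟨c, rfl⟩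
        simp only [SetLike.mem_coe, LinearMap.mem_ker]
        rw [← hFcol]
        exact congrFun h0 c
      have := Submodule.span_le.mpr hrange
      exact this hv
    · intro hker
      funext c
      rw [hFcol]
      have : (fun p => Q p c) ∈ LinearMap.ker R.mulVecLin := by
        rw [← hQspan]
        exact Submodule.subset_span ⟨c, rfl⟩
      simpa using hker _ this
  -- kernel characterization
  have hkermem : ∀ v : (Fin h × Fin m) → ℝ,
      v ∈ LinearMap.ker R.mulVecLin ↔ ∀ j, ∑ r : Fin h, v (r, j) = 0 := by
    intro v
    rw [LinearMap.mem_ker]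
    constructor
    · intro hv j
      have := congrFun hv j
      simpa [hR, Matrix.mulVecLin_apply, Matrix.mulVec, dotProduct,
        Fintype.sum_prod_type, Finset.sum_ite_eq] using this
    · intro hv
      funext j
      simpa [hR, Matrix.mulVecLin_apply, Matrix.mulVec, dotProduct,
        Fintype.sum_prod_type, Finset.sum_ite_eq] using hv j
  rw [step1]
  constructor
  · intro H
    by_cases hψ0 : ψ = 0
    · left; exact hψ0
    · right
      obtain ⟨j, hj⟩ := Function.ne_iff.mp hψ0
      have key : ∀ r : Fin h, lam ^ (h - 1 - (r : ℕ)) = lam ^ (h - 1) := by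
        intro r
        set r0 : Fin h := ⟨0, h1⟩ with hr0
        set v : (Fin h × Fin m) → ℝ :=
          fun p => (if p = (r, j) then 1 else 0) - (if p = (r0, j) then 1 else 0) with hv
        have hvker : v ∈ LinearMap.ker R.mulVecLin := by
          rw [hkermem]
          intro j'
          simp only [hv, Finset.sum_sub_distrib, Prod.mk.injEq, ite_and]
          rw [Finset.sum_ite_eq', Finset.sum_ite_eq']
          simp
        have hFv : F v = w (r, j) - w (r0, j) := by
          simp only [F, LinearMap.coe_mk, AddHom.coe_mk, hv, sub_smul, ite_smul, one_smul,
            zero_smul, Finset.sum_sub_distrib, Finset.sum_ite_eq', Finset.mem_univ, if_true]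
        have := H v hvker
        rw [hFv, sub_eq_zero] at this
        rw [hwval, hwval] at this
        have h00 : ((r0 : Fin h) : ℕ) = 0 := rfl
        rw [h00] at this
        simp only [Nat.sub_zero] at this
        exact mul_right_cancel₀ hj this
      have k1 : lam ^ (h - 1) = 1 := by
        have := key ⟨h - 1, by omega⟩
        simpa using this.symm
      have k2 : lam = lam ^ (h - 1) := by
        have := key ⟨h - 2, by omega⟩
        have e : h - 1 - (h - 2) = 1 := by omega
        rw [e] at this
        simpa using this
      rw [k1] at k2; exact k2
  · intro H v hv
    rw [hkermem] at hv
    rcases H with hψ0 | hlam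
    · have : ∀ p, w p = 0 := by
        intro p; rw [hwval, hψ0]; simp
      simp only [F, LinearMap.coe_mk, AddHom.coe_mk]
      simp [this]
    · have hwψ : ∀ p : Fin h × Fin m, w p = ψ p.2 := by
        intro p; rw [hwval, hlam]; simp
      simp only [F, LinearMap.coe_mk, AddHom.coe_mk]
      calc ∑ p, v p • w p = ∑ j', (∑ r : Fin h, v (r, j')) • ψ j' := by
            rw [Fintype.sum_prod_type_right]
            refine Finset.sum_congr rfl fun j' _ => ?_
            rw [Finset.sum_smul]
            exact Finset.sum_congr rfl fun r _ => by rw [hwψ]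
        _ = 0 := by simp [hv]
end

section
/- Suppose (A,B) is controllable, 1 is not an eigenvalue of A, and there exists h ≥ 2 such that A^h has n distinct eigenvalues. Then the pair (A^h, SQ) is controllable, where S = [A^{h-1}B, …, B] and the columns of Q form a basis of ker(1_h^⊤ ⊗ I_m). -/
open Matrix Polynomial Module

lemma aux_rank_iff {K : Type*} [Field K] {n : ℕ} {J : Type*} [Fintype J] (M : Matrix (Fin n) J K) :
    M.rank = n ↔ ∀ φ : Fin n → K, φ ᵥ* M = 0 → φ = 0 := by
  rw [← Matrix.rank_transpose]
  have hdef : Mᵀ.rank = finrank K (LinearMap.range Mᵀ.mulVecLin) := rfl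
  have hrn := LinearMap.finrank_range_add_finrank_ker (Mᵀ.mulVecLin)
  have hpi : finrank K (Fin n → K) = n := by simp
  have happ : ∀ φ : Fin n → K, Mᵀ.mulVecLin φ = φ ᵥ* M := by
    intro φ; rw [Matrix.mulVecLin_apply, Matrix.mulVec_transpose]
  constructor
  · intro hr φ hφ
    have hk0 : finrank K (LinearMap.ker Mᵀ.mulVecLin) = 0 := by omega
    have hbot : LinearMap.ker Mᵀ.mulVecLin = ⊥ := Submodule.finrank_eq_zero.mp hk0
    have : φ ∈ LinearMap.ker Mᵀ.mulVecLin := by rw [LinearMap.mem_ker, happ, hφ]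
    rw [hbot, Submodule.mem_bot] at this
    exact this
  · intro H
    have hbot : LinearMap.ker Mᵀ.mulVecLin = ⊥ := by
      ext φ; simp only [LinearMap.mem_ker, Submodule.mem_bot, happ]
      exact ⟨fun hz => H φ hz, fun hz => by simp [hz]⟩
    rw [hbot] at hrn
    simp only [finrank_bot, add_zero] at hrn
    omega


lemma aux_scalar_mulVec {n : ℕ} (μ : ℂ) (v : Fin n → ℂ) :
    (Matrix.scalar (Fin n) μ) *ᵥ v = μ • v := by
  have h : Matrix.scalar (Fin n) μ = μ • (1 : Matrix (Fin n) (Fin n) ℂ) := by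
    rw [Matrix.scalar_apply, Matrix.smul_one_eq_diagonal]
  rw [h, Matrix.smul_mulVec, Matrix.one_mulVec]

lemma aux_charpoly_eval {n : ℕ} (P : Matrix (Fin n) (Fin n) ℂ) (μ : ℂ) :
    P.charpoly.eval μ = (Matrix.scalar (Fin n) μ - P).det := by
  rw [Matrix.charpoly, _root_.eval_det, Matrix.matPolyEquiv_charmatrix]
  simp

lemma aux_isRoot_iff {n : ℕ} (P : Matrix (Fin n) (Fin n) ℂ) (μ : ℂ) :
    P.charpoly.IsRoot μ ↔ ∃ v : Fin n → ℂ, v ≠ 0 ∧ P *ᵥ v = μ • v := by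
  rw [Polynomial.IsRoot, aux_charpoly_eval, ← Matrix.exists_mulVec_eq_zero_iff]
  constructor
  · rintro ⟨v, hv, hz⟩
    refine ⟨v, hv, ?_⟩
    rw [Matrix.sub_mulVec, aux_scalar_mulVec, sub_eq_zero] at hz
    exact hz.symm
  · rintro ⟨v, hv, hz⟩
    exact ⟨v, hv, by rw [Matrix.sub_mulVec, aux_scalar_mulVec, hz, sub_self]⟩

lemma aux_charpoly_transpose {n : ℕ} {R : Type*} [CommRing R] (P : Matrix (Fin n) (Fin n) R) :
    Pᵀ.charpoly = P.charpoly := by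
  have h : Matrix.charmatrix Pᵀ = (Matrix.charmatrix P)ᵀ := by
    apply Matrix.ext; intro i j
    by_cases hij : i = j
    · subst hij; simp [Matrix.charmatrix_apply_eq]
    · simp [Matrix.charmatrix_apply_ne _ _ _ hij,
        Matrix.charmatrix_apply_ne _ _ _ fun hji => hij hji.symm]
  rw [Matrix.charpoly, Matrix.charpoly, h, Matrix.det_transpose]

lemma aux_eig {n h : ℕ} (N : Matrix (Fin n) (Fin n) ℂ)
    (hnodup : ((N ^ h).charpoly).roots.Nodup)
    (μ : ℂ) (φ : Fin n → ℂ) (hφ : φ ≠ 0) (hm : (N ^ h) *ᵥ φ = μ • φ) :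
    ∃ l : ℂ, N *ᵥ φ = l • φ := by
  rcases Nat.eq_zero_or_pos n with hn | hn
  · subst hn; exact absurd (Subsingleton.elim φ 0) hφ
  set P := N ^ h with hP
  set g : Module.End ℂ (Fin n → ℂ) := P.mulVecLin with hg
  have hφE : φ ∈ g.eigenspace μ := Module.End.mem_eigenspace_iff.mpr (by simpa [hg] using hm)
  have hne : P.charpoly ≠ 0 := (Matrix.charpoly_monic P).ne_zero
  have hdeg : P.charpoly.natDegree = n := by
    rw [Matrix.charpoly_natDegree_eq_dim, Fintype.card_fin]
  have hcard : P.charpoly.roots.card = n := by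
    rw [Polynomial.splits_iff_card_roots.mp (IsAlgClosed.splits P.charpoly), hdeg]
  have hμroot : μ ∈ P.charpoly.roots := by
    rw [Polynomial.mem_roots hne]
    exact (aux_isRoot_iff P μ).mpr ⟨φ, hφ, hm⟩
  set T : Finset ℂ := P.charpoly.roots.toFinset.erase μ with hT
  have hcardT : T.card = n - 1 := by
    rw [hT, Finset.card_erase_of_mem (Multiset.mem_toFinset.mpr hμroot),
      Multiset.toFinset_card_of_nodup hnodup, hcard]
  have hex : ∀ ν : T, ∃ v : Fin n → ℂ, v ≠ 0 ∧ P *ᵥ v = (ν : ℂ) • v := by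
    rintro ⟨ν, hν⟩
    have : (ν : ℂ) ∈ P.charpoly.roots := Multiset.mem_toFinset.mp (Finset.mem_of_mem_erase hν)
    exact (aux_isRoot_iff P ν).mp ((Polynomial.mem_roots hne).mp this)
  choose xs hxs0 hxs using hex
  have heigvec : ∀ ν : T, g.HasEigenvector (ν : ℂ) (xs ν) := fun ν =>
    ⟨Module.End.mem_eigenspace_iff.mpr (by simpa [hg] using hxs ν), hxs0 ν⟩
  have li : LinearIndependent ℂ xs :=
    Module.End.eigenvectors_linearIndependent' g (fun ν : T => (ν : ℂ))
      Subtype.coe_injective xs heigvec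
  set F : Submodule ℂ (Fin n → ℂ) := Submodule.span ℂ (Set.range xs) with hF
  have hFdim : finrank ℂ F = n - 1 := by
    rw [hF, finrank_span_eq_card li, Fintype.card_coe, hcardT]
  have hFle : F ≤ ⨆ ν ∈ (T : Set ℂ), g.eigenspace ν := by
    rw [hF, Submodule.span_le]
    rintro - ⟨ν, rfl⟩
    exact Submodule.mem_iSup_of_mem (ν : ℂ)
      (Submodule.mem_iSup_of_mem ν.2 (heigvec ν).1)
  have hμT : μ ∉ (T : Set ℂ) := by simp [hT]
  have hdisj : Disjoint (g.eigenspace μ) F :=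
    ((Module.End.eigenspaces_iSupIndep g).disjoint_biSup hμT).mono_right hFle
  have hsum := Submodule.finrank_sup_add_finrank_inf_eq (g.eigenspace μ) F
  rw [disjoint_iff.mp hdisj, finrank_bot, add_zero] at hsum
  have htop : finrank ℂ (g.eigenspace μ ⊔ F : Submodule ℂ (Fin n → ℂ)) ≤ n := by
    have := Submodule.finrank_le (g.eigenspace μ ⊔ F)
    simpa using this
  have hE1 : finrank ℂ (g.eigenspace μ) ≤ 1 := by omega
  have hspan : (ℂ ∙ φ) = g.eigenspace μ :=
    Submodule.eq_of_le_of_finrank_le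
      ((Submodule.span_singleton_le_iff_mem _ _).mpr hφE)
      (le_trans hE1 (by rw [finrank_span_singleton hφ]))
  have hcomm : P * N = N * P := by rw [hP, ← pow_succ, ← pow_succ']
  have hmem : N *ᵥ φ ∈ g.eigenspace μ := by
    refine Module.End.mem_eigenspace_iff.mpr ?_
    show P *ᵥ (N *ᵥ φ) = μ • (N *ᵥ φ)
    rw [Matrix.mulVec_mulVec, hcomm, ← Matrix.mulVec_mulVec, hm, Matrix.mulVec_smul]
  rw [← hspan] at hmem
  obtain ⟨l, hl⟩ := Submodule.mem_span_singleton.mp hmem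
  exact ⟨l, hl.symm⟩

lemma aux_vecMul_smul_mat {a : ℕ} {J : Type*} (φ : Fin a → ℂ) (c : ℂ) (M : Matrix (Fin a) J ℂ) :
    φ ᵥ* (c • M) = c • (φ ᵥ* M) := by
  ext j
  simp only [Matrix.vecMul, dotProduct, Matrix.smul_apply, Pi.smul_apply,
    smul_eq_mul, Finset.mul_sum]
  exact Finset.sum_congr rfl fun i _ => by ring

lemma aux_vecMul_sum {a : ℕ} {J ι : Type*} (s : Finset ι) (φ : Fin a → ℂ)
    (f : ι → Matrix (Fin a) J ℂ) :
    φ ᵥ* (∑ i ∈ s, f i) = ∑ i ∈ s, φ ᵥ* f i := by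
  classical
  induction s using Finset.induction_on with
  | empty => simp [Matrix.vecMul_zero]
  | @insert a s h ih => rw [Finset.sum_insert h, Finset.sum_insert h, Matrix.vecMul_add, ih]

lemma aux_vanish_all {n : ℕ} {J : Type*} (hn : 0 < n) (M : Matrix (Fin n) (Fin n) ℂ)
    (G : Matrix (Fin n) J ℂ) (φ : Fin n → ℂ)
    (hφ : ∀ i : Fin n, φ ᵥ* (M ^ (i : ℕ) * G) = 0) (k : ℕ) :
    φ ᵥ* (M ^ k * G) = 0 := by
  have hmon := Matrix.charpoly_monic M
  have hdeg : M.charpoly.natDegree = n := by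
    rw [Matrix.charpoly_natDegree_eq_dim, Fintype.card_fin]
  have hne1 : M.charpoly ≠ 1 := by
    intro hc; rw [hc, Polynomial.natDegree_one] at hdeg; omega
  have hdp : ((X : ℂ[X]) ^ k %ₘ M.charpoly).natDegree < n := by
    have := Polynomial.natDegree_modByMonic_lt ((X : ℂ[X]) ^ k) hmon hne1; omega
  have hMk : M ^ k = ∑ i ∈ Finset.range n, ((X : ℂ[X]) ^ k %ₘ M.charpoly).coeff i • M ^ i := by
    conv_lhs => rw [Matrix.pow_eq_aeval_mod_charpoly]
    rw [Polynomial.aeval_eq_sum_range' hdp]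
  rw [hMk, Matrix.sum_mul, aux_vecMul_sum]
  apply Finset.sum_eq_zero
  intro i hi
  rw [Matrix.smul_mul, aux_vecMul_smul_mat, hφ ⟨i, Finset.mem_range.mp hi⟩, smul_zero]

lemma aux_map_mul {I J L : Type*} [Fintype J] (M : Matrix I J ℝ) (N : Matrix J L ℝ) :
    (M * N).map Complex.ofReal = M.map Complex.ofReal * N.map Complex.ofReal :=
  Matrix.map_mul (f := Complex.ofRealHom)

lemma aux_map_pow {a : ℕ} (M : Matrix (Fin a) (Fin a) ℝ) (k : ℕ) :
    (M ^ k).map Complex.ofReal = (M.map Complex.ofReal) ^ k := by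
  induction k with
  | zero => ext i j; simp [Matrix.map_apply, Matrix.one_apply]; split <;> simp
  | succ k ih => rw [pow_succ, pow_succ, aux_map_mul, ih]

lemma aux_vecMul_ofReal {a : ℕ} {J : Type*} (φ : Fin a → ℝ) (M : Matrix (Fin a) J ℝ) :
    (fun i => (φ i : ℂ)) ᵥ* (M.map Complex.ofReal) = fun j => ((φ ᵥ* M) j : ℂ) := by
  ext j
  simp only [Matrix.vecMul, dotProduct, Matrix.map_apply]
  push_cast
  rfl

lemma aux_re_im_vecMul {a : ℕ} {J : Type*} (φ : Fin a → ℂ) (M : Matrix (Fin a) J ℝ)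
    (hz : φ ᵥ* (M.map Complex.ofReal) = 0) :
    (fun i => (φ i).re) ᵥ* M = 0 ∧ (fun i => (φ i).im) ᵥ* M = 0 := by
  constructor <;> ext j <;>
  · have h1 := congrFun hz j
    simp only [Matrix.vecMul, dotProduct, Matrix.map_apply, Pi.zero_apply] at h1 ⊢
    first
    | · have := congrArg Complex.re h1
        rw [Complex.re_sum] at this
        simpa [Complex.mul_re] using this
    | · have := congrArg Complex.im h1
        rw [Complex.im_sum] at this
        simpa [Complex.mul_im] using this

lemma aux_re_im_mulVec {a : ℕ} {J : Type*} [Fintype J] (u : J → ℂ) (M : Matrix (Fin a) J ℝ)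
    (hz : (M.map Complex.ofReal) *ᵥ u = 0) :
    M *ᵥ (fun i => (u i).re) = 0 ∧ M *ᵥ (fun i => (u i).im) = 0 := by
  constructor <;> ext j <;>
  · have h1 := congrFun hz j
    simp only [Matrix.mulVec, dotProduct, Matrix.map_apply, Pi.zero_apply] at h1 ⊢
    first
    | · have := congrArg Complex.re h1
        rw [Complex.re_sum] at this
        simpa [Complex.mul_re] using this
    | · have := congrArg Complex.im h1
        rw [Complex.im_sum] at this
        simpa [Complex.mul_im] using this

/-- A pair `(F, G)` is controllable if the controllability matrix
`[G, FG, …, F^{n-1}G]` has rank `n`. -/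
def Controllable {n q : ℕ} (F : Matrix (Fin n) (Fin n) ℝ)
    (G : Matrix (Fin n) (Fin q) ℝ) : Prop :=
  (Matrix.of fun x (p : Fin n × Fin q) => ((F ^ (p.1 : ℕ)) * G) x p.2).rank = n

set_option maxHeartbeats 1000000 in
/-- If `(A,B)` is controllable, `1` is not an eigenvalue of `A`, and
`h ≥ 2` is such that `A^h` has `n` distinct (complex) eigenvalues, then the pair
`(A^h, SQ)` is controllable, where `S = [A^{h-1}B, …, B]` and the columns of `Q`
form a basis of `ker (1ₕᵀ ⊗ Iₘ)`. -/
theorem stmt_4 (n m h : ℕ) (hh : 2 ≤ h)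
    (A : Matrix (Fin n) (Fin n) ℝ) (B : Matrix (Fin n) (Fin m) ℝ)
    (hctrb : Controllable A B)
    (h1 : ¬ ((A.map (Complex.ofReal)).charpoly.IsRoot 1))
    (hsimple : (((A ^ h).map (Complex.ofReal)).charpoly.roots).Nodup)
    (S : Matrix (Fin n) (Fin h × Fin m) ℝ)
    (hS : S = Matrix.of fun x p => ((A ^ (h - 1 - (p.1 : ℕ))) * B) x p.2)
    (R : Matrix (Fin m) (Fin h × Fin m) ℝ)
    (hR : R = Matrix.of fun j p => if p.2 = j then 1 else 0)
    (Q : Matrix (Fin h × Fin m) (Fin (m * (h - 1))) ℝ)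
    (hQind : LinearIndependent ℝ (fun c : Fin (m * (h - 1)) => fun p => Q p c))
    (hQspan : Submodule.span ℝ (Set.range (fun c : Fin (m * (h - 1)) => fun p => Q p c))
        = LinearMap.ker R.mulVecLin) :
    Controllable (A ^ h) (S * Q) := by
  classical
  unfold Controllable at hctrb ⊢
  set Ac := A.map Complex.ofReal with hAc
  set Bc := B.map Complex.ofReal with hBc
  set Sc := S.map Complex.ofReal with hSc
  set Qc := Q.map Complex.ofReal with hQc
  set Rc := R.map Complex.ofReal with hRc
  set Mc := Ac ^ h with hMc
  set G := Sc * Qc with hG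
  clear_value G Mc Rc Qc Sc Bc Ac
  have claim : ∀ ψ : Fin n → ℂ, (∀ k : Fin n, ψ ᵥ* (Mc ^ (k : ℕ) * G) = 0) → ψ = 0 := by
    intro ψ hψ
    rcases Nat.eq_zero_or_pos n with hn | hn
    · ext i; exact absurd i.isLt (by omega)
    by_contra hne
    have hall : ∀ k : ℕ, ψ ᵥ* (Mc ^ k * G) = 0 := aux_vanish_all hn Mc G ψ hψ
    set K : Submodule ℂ (Fin n → ℂ) := ⨅ k : ℕ, LinearMap.ker ((Mc ^ k * G)ᵀ.mulVecLin)
      with hK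
    have hmemK : ∀ χ : Fin n → ℂ, χ ∈ K ↔ ∀ k : ℕ, χ ᵥ* (Mc ^ k * G) = 0 := by
      intro χ
      simp only [hK, Submodule.mem_iInf, LinearMap.mem_ker, Matrix.mulVecLin_apply,
        Matrix.mulVec_transpose]
    have hψK : ψ ∈ K := (hmemK ψ).mpr hall
    have hinv : ∀ χ ∈ K, (Mcᵀ).mulVecLin χ ∈ K := by
      intro χ hχ
      rw [hmemK] at hχ ⊢
      intro k
      rw [Matrix.mulVecLin_apply, Matrix.mulVec_transpose, Matrix.vecMul_vecMul,
        ← Matrix.mul_assoc, ← pow_succ']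
      exact hχ (k + 1)
    set f : Module.End ℂ K := LinearMap.restrict (Mcᵀ).mulVecLin hinv with hf
    clear_value f
    haveI : Nontrivial K := nontrivial_of_ne ⟨ψ, hψK⟩ 0 (by
      intro hc; exact hne (by simpa using congrArg Subtype.val hc))
    obtain ⟨μ, hμ⟩ := Module.End.exists_eigenvalue f
    obtain ⟨v, hv⟩ := hμ.exists_hasEigenvector
    set φ₀ : Fin n → ℂ := (v : Fin n → ℂ) with hφ₀
    clear_value φ₀
    have hφ₀ne : φ₀ ≠ 0 := by
      intro hc
      rw [hφ₀] at hc
      exact hv.right ((Submodule.coe_eq_zero).mp hc)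
    have heig : φ₀ ᵥ* Mc = μ • φ₀ := by
      have h6 := congrArg Subtype.val hv.apply_eq_smul
      rw [hf] at h6
      rw [hφ₀]
      simpa [LinearMap.restrict_apply, Matrix.mulVecLin_apply,
        Matrix.mulVec_transpose] using h6
    have hvK : ∀ k : ℕ, φ₀ ᵥ* (Mc ^ k * G) = 0 := (hmemK φ₀).mp (by rw [hφ₀]; exact v.2)
    have hK0 : φ₀ ᵥ* G = 0 := by simpa using hvK 0
    have htr : (Acᵀ) ^ h = Mcᵀ := by rw [hMc, Matrix.transpose_pow]
    have hnodup : (((Acᵀ) ^ h).charpoly).roots.Nodup := by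
      rw [htr, aux_charpoly_transpose, hMc, hAc, ← aux_map_pow]
      exact hsimple
    obtain ⟨l, hl⟩ := aux_eig (Acᵀ) hnodup μ φ₀ hφ₀ne
      (by rw [htr, Matrix.mulVec_transpose, heig])
    have hlv : φ₀ ᵥ* Ac = l • φ₀ := by rw [← Matrix.mulVec_transpose, hl]
    have hlroot : Ac.charpoly.IsRoot l := by
      rw [← aux_charpoly_transpose]
      exact (aux_isRoot_iff (Acᵀ) l).mpr ⟨φ₀, hφ₀ne, hl⟩
    have hl1 : l ≠ 1 := by rintro rfl; exact h1 hlroot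
    have hpow : ∀ k : ℕ, φ₀ ᵥ* (Ac ^ k) = (l ^ k) • φ₀ := by
      intro k
      induction k with
      | zero => simp [Matrix.vecMul_one]
      | succ k ih =>
        rw [pow_succ, ← Matrix.vecMul_vecMul, ih, Matrix.smul_vecMul, hlv, smul_smul,
          ← pow_succ]
    have hABk : ∀ k : ℕ, φ₀ ᵥ* (Ac ^ k * Bc) = (l ^ k) • (φ₀ ᵥ* Bc) := by
      intro k
      rw [← Matrix.vecMul_vecMul, hpow, Matrix.smul_vecMul]
    set b : Fin m → ℂ := φ₀ ᵥ* Bc with hb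
    clear_value b
    set r : Fin h × Fin m → ℂ := φ₀ ᵥ* Sc with hr
    clear_value r
    have hrent : ∀ p : Fin h × Fin m, r p = l ^ (h - 1 - (p.1 : ℕ)) * b p.2 := by
      intro p
      have h8 : Ac ^ (h - 1 - (p.1 : ℕ)) * Bc =
          (A ^ (h - 1 - (p.1 : ℕ)) * B).map Complex.ofReal := by
        rw [aux_map_mul, aux_map_pow, hAc, hBc]
      have h7 : r p = (φ₀ ᵥ* (Ac ^ (h - 1 - (p.1 : ℕ)) * Bc)) p.2 := by
        rw [hr, h8]
        simp only [Matrix.vecMul, dotProduct, hSc, Matrix.map_apply]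
        refine Finset.sum_congr rfl fun x _ => ?_
        congr 1
        rw [congrFun (congrFun hS x) p]
        rfl
      rw [h7, hABk, Pi.smul_apply, smul_eq_mul, hb]
    have hcols : ∀ c : Fin (m * (h - 1)), r ⬝ᵥ (fun p => ((Q p c : ℝ) : ℂ)) = 0 := by
      intro c
      have h9 := congrFun hK0 c
      rw [hG, ← Matrix.vecMul_vecMul] at h9
      simpa [Matrix.vecMul, dotProduct, hQc, Matrix.map_apply, hr,
        dotProduct] using h9
    have hmemR : ∀ w ∈ Submodule.span ℝ (Set.range fun c : Fin (m * (h - 1)) =>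
        fun p => Q p c), r ⬝ᵥ (fun p => ((w p : ℝ) : ℂ)) = 0 := by
      intro w hwk
      induction hwk using Submodule.span_induction with
      | mem x hx => obtain ⟨c, rfl⟩ := hx; exact hcols c
      | zero => simp
      | add x y hx hy ihx ihy =>
        have hxy : (fun p => (((x + y) p : ℝ) : ℂ)) =
            (fun p => ((x p : ℝ) : ℂ)) + fun p => ((y p : ℝ) : ℂ) := by
          ext p; simp only [Pi.add_apply]; push_cast; ring
        rw [hxy, dotProduct_add, ihx, ihy, add_zero]
      | smul a x hx ihx =>
        have hax : (fun p => (((a • x) p : ℝ) : ℂ)) =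
            (a : ℂ) • fun p => ((x p : ℝ) : ℂ) := by
          ext p; simp only [Pi.smul_apply, smul_eq_mul]; push_cast; ring
        rw [hax, dotProduct_smul, ihx, smul_zero]
    have hannih : ∀ u : Fin h × Fin m → ℂ, Rc *ᵥ u = 0 → r ⬝ᵥ u = 0 := by
      intro u hu
      obtain ⟨hur, hui⟩ := aux_re_im_mulVec u R (by rw [← hRc]; exact hu)
      have hd : u = (fun p => (((u p).re : ℝ) : ℂ)) +
          Complex.I • (fun p => (((u p).im : ℝ) : ℂ)) := by
        ext p
        simp only [Pi.add_apply, Pi.smul_apply, smul_eq_mul]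
        rw [mul_comm]
        exact (Complex.re_add_im (u p)).symm
      have hmr : ∀ w : Fin h × Fin m → ℝ, R *ᵥ w = 0 →
          r ⬝ᵥ (fun p => ((w p : ℝ) : ℂ)) = 0 := by
        intro w hw
        refine hmemR w ?_
        rw [hQspan, LinearMap.mem_ker, Matrix.mulVecLin_apply]; exact hw
      rw [hd, dotProduct_add, dotProduct_smul, hmr _ hur, hmr _ hui, smul_zero,
        add_zero]
    have hbz : b = 0 := by
      ext j
      have hij : h - 1 - (h - 2) = 1 := by omega
      have hij2 : h - 1 - (h - 1) = 0 := by omega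
      set i1 : Fin h := ⟨h - 2, by omega⟩ with hi1
      set i2 : Fin h := ⟨h - 1, by omega⟩ with hi2
      set u : Fin h × Fin m → ℂ := Pi.single (i1, j) 1 - Pi.single (i2, j) 1 with hu
      clear_value u
      have hker : Rc *ᵥ u = 0 := by
        rw [hu, Matrix.mulVec_sub]
        ext j'
        simp only [Matrix.mulVec_single, Pi.sub_apply, mul_one, Pi.zero_apply]
        rw [hRc, hR]
        simp [Matrix.map_apply]
      have hd := hannih u hker
      rw [hu, dotProduct_sub, dotProduct_single, dotProduct_single, mul_one, mul_one,
        hrent, hrent] at hd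
      have hval1 : ((i1, j).1 : ℕ) = h - 2 := rfl
      have hval2 : ((i2, j).1 : ℕ) = h - 1 := rfl
      rw [hval1, hval2, hij, hij2, pow_one, pow_zero, one_mul] at hd
      have hfac : (l - 1) * b j = 0 := by ring_nf; ring_nf at hd; linear_combination hd
      rcases mul_eq_zero.mp hfac with hc | hc
      · exact absurd (sub_eq_zero.mp hc) hl1
      · exact hc
    have hctrb' : ∀ χ : Fin n → ℝ,
        χ ᵥ* (Matrix.of fun x (p : Fin n × Fin m) => ((A ^ (p.1 : ℕ)) * B) x p.2) = 0 →
          χ = 0 := (aux_rank_iff _).mp hctrb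
    have hzc : φ₀ ᵥ* ((Matrix.of fun x (p : Fin n × Fin m) =>
        ((A ^ (p.1 : ℕ)) * B) x p.2).map Complex.ofReal) = 0 := by
      ext p
      obtain ⟨k, j⟩ := p
      have h8 : Ac ^ (k : ℕ) * Bc = (A ^ (k : ℕ) * B).map Complex.ofReal := by
        rw [aux_map_mul, aux_map_pow, hAc, hBc]
      have h9 : (φ₀ ᵥ* (Ac ^ (k : ℕ) * Bc)) j = 0 := by
        rw [hABk, hbz]; simp
      rw [h8] at h9
      simpa [Matrix.vecMul, dotProduct, Matrix.map_apply, Matrix.of_apply] using h9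
    obtain ⟨hre, him⟩ := aux_re_im_vecMul φ₀ _ hzc
    apply hφ₀ne
    ext i
    have e1 := congrFun (hctrb' _ hre) i
    have e2 := congrFun (hctrb' _ him) i
    show φ₀ i = 0
    exact Complex.ext (by simpa using e1) (by simpa using e2)
  rw [aux_rank_iff]
  intro φ hφ
  have hψ : ∀ k : Fin n, (fun i => ((φ i : ℝ) : ℂ)) ᵥ* (Mc ^ (k : ℕ) * G) = 0 := by
    intro k
    have hmap : ((A ^ h) ^ (k : ℕ) * (S * Q)).map Complex.ofReal = Mc ^ (k : ℕ) * G := by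
      rw [aux_map_mul, aux_map_pow, aux_map_pow, aux_map_mul, hMc, hG, hAc, hSc, hQc]
    rw [← hmap, aux_vecMul_ofReal]
    ext j
    have h2 := congrFun hφ (k, j)
    have h4 : (φ ᵥ* ((A ^ h) ^ (k : ℕ) * (S * Q))) j = 0 := h2
    rw [h4]
    exact Complex.ofReal_zero
  have hz := claim _ hψ
  ext i
  have h3 : ((φ i : ℝ) : ℂ) = 0 := congrFun hz i
  show φ i = 0
  exact_mod_cast h3
end

section
/- If A is a matrix with eigenvalue 1 and left eigenvector φ (φ^⊤ A = φ^⊤), then for any h ≥ 2, φ^⊤ A^h = φ^⊤ and φ^⊤ S Q = 0, where S = [A^{h-1}B, …, B] and Q spans ker(1_h^⊤ ⊗ I_m); hence the pair (A^h, SQ) fails the PBH controllability test and is not controllable. -/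
lemma pow_eig {n : ℕ} (A : Matrix (Fin n) (Fin n) ℝ) (φ : Fin n → ℝ)
    (heig : Matrix.vecMul φ A = φ) : ∀ k, Matrix.vecMul φ (A ^ k) = φ := by
  intro k
  induction k with
  | zero => simp
  | succ k ih => rw [pow_succ, ← Matrix.vecMul_vecMul, ih, heig]

/-- If `φᵀ A = φᵀ` with `φ ≠ 0` (eigenvalue 1), then for any `h ≥ 2`,
`φᵀ A^h = φᵀ` and `φᵀ S Q = 0` (with `S = [A^{h-1}B, …, B]` and `Q` spanning
`ker (1ₕᵀ ⊗ Iₘ)`), hence `(A^h, SQ)` is not controllable. -/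
theorem stmt_5 (n m h : ℕ) (hh : 2 ≤ h)
    (A : Matrix (Fin n) (Fin n) ℝ) (B : Matrix (Fin n) (Fin m) ℝ)
    (φ : Fin n → ℝ) (hφ : φ ≠ 0) (heig : Matrix.vecMul φ A = φ)
    (S : Matrix (Fin n) (Fin h × Fin m) ℝ)
    (hS : S = Matrix.of fun x p => ((A ^ (h - 1 - (p.1 : ℕ))) * B) x p.2)
    (R : Matrix (Fin m) (Fin h × Fin m) ℝ)
    (hR : R = Matrix.of fun j p => if p.2 = j then 1 else 0)
    (Q : Matrix (Fin h × Fin m) (Fin (m * (h - 1))) ℝ)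
    (hQspan : Submodule.span ℝ (Set.range (fun c : Fin (m * (h - 1)) => fun p => Q p c))
        = LinearMap.ker R.mulVecLin) :
    Matrix.vecMul φ (A ^ h) = φ ∧ Matrix.vecMul φ (S * Q) = 0 ∧ ¬ Controllable (A ^ h) (S * Q) := by
  have hpow := pow_eig A φ heig
  -- φᵀ S has entries depending only on the second index
  have hφS : Matrix.vecMul φ S = fun p => Matrix.vecMul φ B p.2 := by
    funext p
    simp only [hS, Matrix.vecMul, dotProduct, Matrix.of_apply]
    have : ∀ x, φ x * ((A ^ (h - 1 - (p.1:ℕ))) * B) x p.2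
        = φ x * ((A ^ (h - 1 - (p.1:ℕ))) * B) x p.2 := fun _ => rfl
    calc ∑ x, φ x * ((A ^ (h - 1 - (p.1:ℕ))) * B) x p.2
        = Matrix.vecMul φ ((A ^ (h - 1 - (p.1:ℕ))) * B) p.2 := rfl
      _ = Matrix.vecMul (Matrix.vecMul φ (A ^ (h - 1 - (p.1:ℕ)))) B p.2 := by
          rw [Matrix.vecMul_vecMul]
      _ = Matrix.vecMul φ B p.2 := by rw [hpow]
  -- each column of Q is in ker R
  have hcol : ∀ c j, ∑ i : Fin h, Q (i, j) c = 0 := by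
    intro c j
    have hmem : (fun p => Q p c) ∈ LinearMap.ker R.mulVecLin := by
      rw [← hQspan]
      exact Submodule.subset_span ⟨c, rfl⟩
    have := LinearMap.mem_ker.mp hmem
    have hj := congrFun this j
    simp only [Matrix.mulVecLin_apply, Matrix.mulVec, dotProduct, hR,
      Matrix.of_apply, Pi.zero_apply] at hj
    rw [← hj, Fintype.sum_prod_type]
    congr 1
    funext i
    simp
  have hSQ : Matrix.vecMul φ (S * Q) = 0 := by
    funext c
    rw [← Matrix.vecMul_vecMul, hφS]
    simp only [Matrix.vecMul, dotProduct, Pi.zero_apply]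
    rw [Fintype.sum_prod_type]
    rw [Finset.sum_comm]
    calc ∑ j : Fin m, ∑ i : Fin h, Matrix.vecMul φ B j * Q (i, j) c
        = ∑ j : Fin m, Matrix.vecMul φ B j * ∑ i : Fin h, Q (i, j) c := by
          simp [Finset.mul_sum]
      _ = 0 := by simp [hcol]
  refine ⟨hpow h, hSQ, ?_⟩
  intro hc
  unfold Controllable at hc
  set M : Matrix (Fin n) (Fin n × Fin (m * (h - 1))) ℝ :=
    Matrix.of fun x p => (((A ^ h) ^ (p.1 : ℕ)) * (S * Q)) x p.2 with hM
  have hφM : Matrix.vecMul φ M = 0 := by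
    funext p
    have : Matrix.vecMul φ (((A ^ h) ^ (p.1:ℕ)) * (S * Q))
        = Matrix.vecMul φ (S * Q) := by
      rw [← Matrix.vecMul_vecMul, ← pow_mul, hpow]
    calc Matrix.vecMul φ M p
        = Matrix.vecMul φ (((A ^ h) ^ (p.1:ℕ)) * (S * Q)) p.2 := rfl
      _ = 0 := by rw [this, hSQ]; rfl
  have hker : Matrix.mulVec M.transpose φ = 0 := by
    rw [Matrix.mulVec_transpose, hφM]
  have hmem : φ ∈ LinearMap.ker (M.transpose.mulVecLin) := hker
  have hrn := LinearMap.finrank_range_add_finrank_ker (M.transpose.mulVecLin)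
  have hrT : M.transpose.rank = n := by rw [Matrix.rank_transpose]; exact hc
  rw [show Module.finrank ℝ ↥(LinearMap.range M.transpose.mulVecLin) = M.transpose.rank from rfl, hrT,
    Module.finrank_pi] at hrn
  simp only [Fintype.card_fin] at hrn
  have hk0 : Module.finrank ℝ ↥(LinearMap.ker M.transpose.mulVecLin) = 0 := by omega
  have : LinearMap.ker M.transpose.mulVecLin = ⊥ := Submodule.finrank_eq_zero.mp hk0
  rw [this] at hmem
  exact hφ (by simpa using hmem)
end
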